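/- arXiv:2008.08844 — 2 statements merged into one kernel-verified Lean document; each statement's English description precedes it below -/
import Mathlib

section
/- Assume G is connected, is not bipartite (i.e. G is not 2-colorable), and every degree d_i > 0. Then every eigenvalue λ of the symmetric normalized Laplacian L_sym satisfies λ < 2; equivalently, −1 is not an eigenvalue of the symmetric affinity matrix A_sym = D^{-1/2} A D^{-1/2}. -/
/-!
Let `A_sym u = μ u` with `u ≠ 0` and put `w = D^{-1/2} u`. Expanding the signless form
`∑_{i,j} A_ij (w_i + w_j)^2` gives `2 (1 + μ) ‖u‖²`, so `μ ≥ -1`, i.e. `λ = 1 - μ ≤ 2`.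
If `μ = -1`, every edge term vanishes, so `w` changes sign along each edge; on a connected
graph `w` then has no zeros, and its sign is a proper 2-colouring.
-/

open Matrix

namespace Matrix

variable {ι : Type*} [Fintype ι]

theorem dotProduct_transpose_mul_mul_mulVec (A B : Matrix ι ι ℝ) (u : ι → ℝ) :
    u ⬝ᵥ ((Bᵀ * A * B) *ᵥ u) = (B *ᵥ u) ⬝ᵥ (A *ᵥ (B *ᵥ u)) := by
  rw [← mulVec_mulVec, ← mulVec_mulVec, dotProduct_mulVec, vecMul_transpose]

theorem sum_mul_add_sq_eq_of_isSymm {A : Matrix ι ι ℝ} (hA : A.IsSymm) (w : ι → ℝ) :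
    ∑ i, ∑ j, A i j * (w i + w j) ^ 2 =
      2 * (∑ i, (∑ j, A i j) * w i ^ 2 + w ⬝ᵥ (A *ᵥ w)) := by
  have hrow : ∑ i, ∑ j, A i j * w i ^ 2 = ∑ i, (∑ j, A i j) * w i ^ 2 := by
    simp only [Finset.sum_mul]
  have hswap : ∑ i, ∑ j, A i j * w j ^ 2 = ∑ i, ∑ j, A i j * w i ^ 2 := by
    rw [Finset.sum_comm]
    exact Finset.sum_congr rfl fun i _ => Finset.sum_congr rfl fun j _ => by rw [hA.apply i j]
  have hcross : ∑ i, ∑ j, A i j * w i * w j = w ⬝ᵥ (A *ᵥ w) := by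
    simp only [dotProduct, mulVec, Finset.mul_sum]
    exact Finset.sum_congr rfl fun i _ => Finset.sum_congr rfl fun j _ => by ring
  calc ∑ i, ∑ j, A i j * (w i + w j) ^ 2
      = ∑ i, ∑ j, A i j * w i ^ 2 + 2 * ∑ i, ∑ j, A i j * w i * w j
          + ∑ i, ∑ j, A i j * w j ^ 2 := by
        simp only [Finset.mul_sum, ← Finset.sum_add_distrib]
        exact Finset.sum_congr rfl fun i _ => Finset.sum_congr rfl fun j _ => by ring
    _ = _ := by rw [hswap, hcross, hrow]; ring

theorem eq_neg_of_sum_mul_add_sq_eq_zero {A : Matrix ι ι ℝ} (hA : ∀ i j, 0 ≤ A i j)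
    {w : ι → ℝ} (h : ∑ i, ∑ j, A i j * (w i + w j) ^ 2 = 0) {i j : ι} (hij : 0 < A i j) :
    w j = -w i := by
  have hterm : A i j * (w i + w j) ^ 2 = 0 := by
    have hnn : ∀ i j, 0 ≤ A i j * (w i + w j) ^ 2 := fun i j => by have := hA i j; positivity
    rw [Finset.sum_eq_zero_iff_of_nonneg fun i _ => Finset.sum_nonneg fun j _ => hnn i j] at h
    exact (Finset.sum_eq_zero_iff_of_nonneg fun j _ => hnn i j).1 (h i (Finset.mem_univ i)) j
      (Finset.mem_univ j)
  have : w i + w j = 0 := by simpa [hij.ne'] using hterm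
  linarith

theorem sum_mul_add_sq_eq_of_mulVec_eq_smul [DecidableEq ι] {A : Matrix ι ι ℝ}
    (hA : A.IsSymm) {s : ι → ℝ} (hs : ∀ i, (∑ j, A i j) * s i ^ 2 = 1) {μ : ℝ} {u : ι → ℝ}
    (hu : (diagonal s * A * diagonal s) *ᵥ u = μ • u) :
    ∑ i, ∑ j, A i j * (s i * u i + s j * u j) ^ 2 = 2 * (1 + μ) * (u ⬝ᵥ u) := by
  have hdeg : ∑ i, (∑ j, A i j) * (s i * u i) ^ 2 = u ⬝ᵥ u := by
    refine Finset.sum_congr rfl fun i _ => ?_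
    linear_combination u i ^ 2 * hs i
  have hform : (diagonal s *ᵥ u) ⬝ᵥ (A *ᵥ (diagonal s *ᵥ u)) = μ * (u ⬝ᵥ u) := by
    rw [← dotProduct_transpose_mul_mul_mulVec, diagonal_transpose, hu, dotProduct_smul,
      smul_eq_mul]
  rw [show diagonal s *ᵥ u = fun i => s i * u i from funext (mulVec_diagonal s u)] at hform
  rw [sum_mul_add_sq_eq_of_isSymm hA, hdeg, hform]
  ring

end Matrix

namespace SimpleGraph

variable {V : Type*} {G : SimpleGraph V}

theorem Preconnected.colorable_two_of_forall_adj_eq_neg (hG : G.Preconnected) {x : V → ℝ}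
    (hx : x ≠ 0) (h : ∀ a b, G.Adj a b → x b = -x a) : G.Colorable 2 := by
  have hwalk : ∀ {a b} (p : G.Walk a b), x a ≠ 0 → x b ≠ 0 := by
    intro a b p
    induction p with
    | nil => exact id
    | cons hab _ ih => exact fun ha => ih (by rw [h _ _ hab]; exact neg_ne_zero.2 ha)
  obtain ⟨v₀, hv₀⟩ := Function.ne_iff.1 hx
  have hne : ∀ v, x v ≠ 0 := fun v => (hG v₀ v).elim fun p => hwalk p hv₀
  refine (Coloring.mk (fun v => decide (0 < x v)) fun {a b} hab => ?_).colorable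
  rw [h a b hab]
  rcases (hne a).lt_or_gt with hlt | hgt
  · simp [hlt.not_gt, hlt]
  · simp [hgt, hgt.le]

variable [Fintype V] [DecidableEq V] [DecidableRel G.Adj]

theorem neg_one_lt_of_normalized_adjMatrix_mulVec_eq_smul (hG : G.Preconnected)
    (hbip : ¬ G.Colorable 2) (hdeg : ∀ i, 0 < ∑ j, G.adjMatrix ℝ i j) {μ : ℝ} {u : V → ℝ}
    (hu : u ≠ 0)
    (hev : (diagonal (fun i => 1 / √(∑ j, G.adjMatrix ℝ i j)) * G.adjMatrix ℝ *
      diagonal (fun i => 1 / √(∑ j, G.adjMatrix ℝ i j))) *ᵥ u = μ • u) :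
    -1 < μ := by
  set s : V → ℝ := fun i => 1 / √(∑ j, G.adjMatrix ℝ i j)
  have hs : ∀ i, (∑ j, G.adjMatrix ℝ i j) * s i ^ 2 = 1 := fun i => by
    rw [div_pow, one_pow, Real.sq_sqrt (hdeg i).le]
    exact mul_one_div_cancel (hdeg i).ne'
  have hsum := sum_mul_add_sq_eq_of_mulVec_eq_smul G.isSymm_adjMatrix hs hev
  have hA : ∀ i j, 0 ≤ G.adjMatrix ℝ i j := fun i j => by
    rw [adjMatrix_apply]; split_ifs <;> norm_num
  have hsum_nonneg : 0 ≤ ∑ i, ∑ j, G.adjMatrix ℝ i j * (s i * u i + s j * u j) ^ 2 :=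
    Finset.sum_nonneg fun i _ => Finset.sum_nonneg fun j _ => mul_nonneg (hA i j) (sq_nonneg _)
  have hu_pos : 0 < u ⬝ᵥ u := by simpa using dotProduct_star_self_pos_iff.2 hu
  refine lt_of_le_of_ne (by nlinarith) fun hμ => hbip ?_
  have hsum_zero : ∑ i, ∑ j, G.adjMatrix ℝ i j * (s i * u i + s j * u j) ^ 2 = 0 := by
    rw [hsum, ← hμ]; ring
  obtain ⟨i, hi⟩ := Function.ne_iff.1 hu
  have hsu : (fun i => s i * u i) ≠ 0 :=
    Function.ne_iff.2 ⟨i, mul_ne_zero (one_div_ne_zero (Real.sqrt_pos.2 (hdeg i)).ne') hi⟩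
  exact hG.colorable_two_of_forall_adj_eq_neg hsu fun a b hab =>
    eq_neg_of_sum_mul_add_sq_eq_zero hA hsum_zero (by simp [hab])

end SimpleGraph

/-- Assume `G` is connected, not bipartite (not 2-colorable), and every degree
`d_i > 0`. Then every eigenvalue `λ` of the symmetric normalized Laplacian
`L_sym` satisfies `λ < 2`; equivalently, `−1` is not an eigenvalue of the
symmetric affinity matrix `A_sym = D^{-1/2} A D^{-1/2}`. -/
theorem non_bipartite_connected_eigenvalue_lt_two
    (N : ℕ) (G : SimpleGraph (Fin N)) [DecidableRel G.Adj]
    (hconn : G.Connected) (hnotbip : ¬ G.Colorable 2)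
    (A : Matrix (Fin N) (Fin N) ℝ) (hA : A = G.adjMatrix ℝ)
    (d : Fin N → ℝ) (hd : ∀ i, d i = ∑ j, A i j) (hdpos : ∀ i, 0 < d i)
    (Asym : Matrix (Fin N) (Fin N) ℝ)
    (hAsym : Asym = Matrix.diagonal (fun i => 1 / Real.sqrt (d i)) * A *
        Matrix.diagonal (fun i => 1 / Real.sqrt (d i)))
    (Lsym : Matrix (Fin N) (Fin N) ℝ) (hLsym : Lsym = 1 - Asym) :
    (∀ (lam : ℝ) (u : Fin N → ℝ), u ≠ 0 → Lsym.mulVec u = lam • u → lam < 2) ∧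
    ¬ ∃ u : Fin N → ℝ, u ≠ 0 ∧ Asym.mulVec u = (-1 : ℝ) • u := by
  have key : ∀ {μ : ℝ} {u : Fin N → ℝ}, u ≠ 0 → Asym *ᵥ u = μ • u → -1 < μ := by
    obtain rfl : d = fun i => ∑ j, A i j := funext hd
    subst hA hAsym
    exact G.neg_one_lt_of_normalized_adjMatrix_mulVec_eq_smul hconn.preconnected hnotbip hdpos
  refine ⟨fun lam u hu hev => ?_, fun ⟨u, hu, hev⟩ => (key hu hev).ne rfl⟩
  have hAsym_ev : Asym *ᵥ u = (1 - lam) • u := by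
    rw [sub_smul, one_smul, ← hev, hLsym, sub_mulVec, one_mulVec, sub_sub_cancel]
  linarith [key hu hAsym_ev]
end

section
/- Every eigenvalue λ of the renormalized symmetric affinity matrix Â_sym = (D+I)^{-1/2} (A+I) (D+I)^{-1/2} satisfies −1 < λ ≤ 1. No connectivity or non-bipartiteness assumption on G is needed. -/
open Matrix BigOperators

/-!
Write `R` for the diagonal matrix of row sums of `B = A + I` and put `w = R^{-1/2} u`. Symmetry of `B`
gives `∑ᵢⱼ Bᵢⱼ (wᵢ ∓ wⱼ)² = 2 (u ⬝ u) ∓ 2 λ (u ⬝ u)`. Nonnegativity of the entries makes the left side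
nonnegative, so `λ ≤ 1`; the self-loops make the diagonal terms `4 Bᵢᵢ wᵢ²` of the `+` sum positive, so
`λ > -1`.
-/

namespace Matrix

variable {n : Type*} [Fintype n]

theorem sum_mul_add_smul_sq_of_isSymm {B : Matrix n n ℝ} (hB : B.IsSymm) (w : n → ℝ) (t : ℝ) :
    ∑ i, ∑ j, B i j * (w i + t * w j) ^ 2 =
      (1 + t ^ 2) * ∑ i, (∑ j, B i j) * w i ^ 2 + 2 * t * (w ⬝ᵥ B *ᵥ w) := by
  have hcol : ∑ i, ∑ j, B i j * w j ^ 2 = ∑ i, (∑ j, B i j) * w i ^ 2 := by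
    rw [Finset.sum_comm]
    simp only [Finset.sum_mul, hB.apply]
  calc ∑ i, ∑ j, B i j * (w i + t * w j) ^ 2
      = ∑ i, ∑ j, (B i j * w i ^ 2 + t ^ 2 * (B i j * w j ^ 2) + 2 * t * (w i * (B i j * w j))) :=
        Finset.sum_congr rfl fun i _ => Finset.sum_congr rfl fun j _ => by ring
    _ = _ := by
        simp only [Finset.sum_add_distrib, ← Finset.mul_sum, ← Finset.sum_mul, hcol, dotProduct, mulVec]
        ring

theorem sum_mul_add_sq_pos {B : Matrix n n ℝ} (hnonneg : ∀ i j, 0 ≤ B i j) (hdiag : ∀ i, 0 < B i i)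
    {w : n → ℝ} (hw : w ≠ 0) : 0 < ∑ i, ∑ j, B i j * (w i + w j) ^ 2 := by
  obtain ⟨k, hk⟩ := Function.ne_iff.mp hw
  have hterm : ∀ i j, 0 ≤ B i j * (w i + w j) ^ 2 := fun i j => by
    have := hnonneg i j; positivity
  refine Finset.sum_pos' (fun i _ => Finset.sum_nonneg fun j _ => hterm i j) ⟨k, Finset.mem_univ k, ?_⟩
  refine Finset.sum_pos' (fun j _ => hterm k j) ⟨k, Finset.mem_univ k, ?_⟩
  have : w k + w k ≠ 0 := by simp only [Pi.zero_apply] at hk; contrapose! hk; linarith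
  have := hdiag k
  positivity

theorem dotProduct_diagonal_mul_mul_diagonal_mulVec [DecidableEq n] (B : Matrix n n ℝ) (s u : n → ℝ) :
    u ⬝ᵥ (diagonal s * B * diagonal s) *ᵥ u = (s * u) ⬝ᵥ B *ᵥ (s * u) := by
  have hright : diagonal s *ᵥ u = s * u := funext (mulVec_diagonal s u)
  have hleft : u ᵥ* diagonal s = s * u := by rw [mul_comm]; exact funext (vecMul_diagonal u s)
  rw [← mulVec_mulVec, ← mulVec_mulVec, dotProduct_mulVec, hright, hleft]

noncomputable def symNormalize [DecidableEq n] (B : Matrix n n ℝ) : Matrix n n ℝ :=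
  diagonal (fun i => 1 / √(∑ j, B i j)) * B * diagonal (fun i => 1 / √(∑ j, B i j))

theorem eigenvalue_symNormalize_mem_Ioc [DecidableEq n] {B : Matrix n n ℝ} (hB : B.IsSymm)
    (hnonneg : ∀ i j, 0 ≤ B i j) (hdiag : ∀ i, 0 < B i i) {lam : ℝ} {u : n → ℝ} (hu : u ≠ 0)
    (heig : B.symNormalize *ᵥ u = lam • u) : lam ∈ Set.Ioc (-1) 1 := by
  set r : n → ℝ := fun i => ∑ j, B i j
  set s : n → ℝ := fun i => 1 / √(r i)
  set w := s * u
  have hr : ∀ i, 0 < r i := fun i =>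
    (hdiag i).trans_le (Finset.single_le_sum (fun j _ => hnonneg i j) (Finset.mem_univ i))
  have hw : w ≠ 0 := by
    contrapose! hu
    funext i
    have : √(r i) ≠ 0 := (Real.sqrt_pos.mpr (hr i)).ne'
    simpa [w, s, this] using congrFun hu i
  have hnorm : ∑ i, r i * w i ^ 2 = u ⬝ᵥ u := by
    refine Finset.sum_congr rfl fun i _ => ?_
    have := (hr i).ne'
    simp only [w, s, Pi.mul_apply, mul_pow, div_pow, Real.sq_sqrt (hr i).le]
    field_simp
  have hform : w ⬝ᵥ B *ᵥ w = lam * (u ⬝ᵥ u) := by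
    rw [← dotProduct_diagonal_mul_mul_diagonal_mulVec, ← symNormalize, heig, dotProduct_smul, smul_eq_mul]
  have hS : 0 < u ⬝ᵥ u := by simpa using dotProduct_star_self_pos_iff.mpr hu
  have hminus := sum_mul_add_smul_sq_of_isSymm hB w (-1)
  have hplus := sum_mul_add_smul_sq_of_isSymm hB w 1
  rw [hnorm, hform] at hminus hplus
  simp only [one_mul] at hplus
  have hminus_nonneg : 0 ≤ ∑ i, ∑ j, B i j * (w i + -1 * w j) ^ 2 :=
    Finset.sum_nonneg fun i _ => Finset.sum_nonneg fun j _ => mul_nonneg (hnonneg i j) (sq_nonneg _)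
  have hplus_pos := sum_mul_add_sq_pos hnonneg hdiag hw
  constructor <;> nlinarith

end Matrix

theorem renormalized_sym_affinity_eigenvalue_bounds_general
    (N : ℕ) (A : Matrix (Fin N) (Fin N) ℝ)
    (hsym : A.IsSymm)
    (h01 : ∀ i j, A i j = 0 ∨ A i j = 1)
    (d : Fin N → ℝ) (hd : ∀ i, d i = ∑ j, A i j)
    (Ahatsym : Matrix (Fin N) (Fin N) ℝ)
    (hAhatsym : Ahatsym = Matrix.diagonal (fun i => 1 / Real.sqrt (d i + 1)) *
        (A + 1) * Matrix.diagonal (fun i => 1 / Real.sqrt (d i + 1))) :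
    ∀ (lam : ℝ) (u : Fin N → ℝ), u ≠ 0 → Ahatsym.mulVec u = lam • u →
      -1 < lam ∧ lam ≤ 1 := by
  intro lam u hu heig
  have hA_nonneg : ∀ i j, 0 ≤ A i j := fun i j => by rcases h01 i j with h | h <;> simp [h]
  have hrow : ∀ i, ∑ j, (A + 1) i j = d i + 1 := fun i => by
    simp [Matrix.add_apply, one_apply, Finset.sum_add_distrib, hd]
  have hAhat : Ahatsym = (A + 1).symNormalize := by simp only [hAhatsym, symNormalize, hrow]
  refine eigenvalue_symNormalize_mem_Ioc (hsym.add isSymm_one) (fun i j => ?_) (fun i => ?_) hu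
    (hAhat ▸ heig)
  · exact add_nonneg (hA_nonneg i j) (by rw [one_apply]; split_ifs <;> norm_num)
  · simpa using (hA_nonneg i i).trans_lt (lt_add_one _)

/-- Every eigenvalue `λ` of the renormalized symmetric affinity matrix
`Â_sym = (D+I)^{-1/2} (A+I) (D+I)^{-1/2}` satisfies `−1 < λ ≤ 1`. -/
theorem renormalized_sym_affinity_eigenvalue_bounds
    (N : ℕ) (A : Matrix (Fin N) (Fin N) ℝ)
    (hsym : A.IsSymm) (hdiag : ∀ i, A i i = 0)
    (h01 : ∀ i j, A i j = 0 ∨ A i j = 1)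
    (d : Fin N → ℝ) (hd : ∀ i, d i = ∑ j, A i j)
    (Ahatsym : Matrix (Fin N) (Fin N) ℝ)
    (hAhatsym : Ahatsym = Matrix.diagonal (fun i => 1 / Real.sqrt (d i + 1)) *
        (A + 1) * Matrix.diagonal (fun i => 1 / Real.sqrt (d i + 1))) :
    ∀ (lam : ℝ) (u : Fin N → ℝ), u ≠ 0 → Ahatsym.mulVec u = lam • u →
      -1 < lam ∧ lam ≤ 1 :=
  renormalized_sym_affinity_eigenvalue_bounds_general N A hsym h01 d hd Ahatsym hAhatsym
end
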